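/- arXiv:2101.06812 — 2 statements merged into one kernel-verified Lean document; each statement's English description precedes it below -/
import Mathlib

section
/- For f ∈ L¹((0,∞); (ν+1)^{-k-1} dν) and k ∈ ℕ, k ≥ 1, define (T_k f)(λ) = k λ^k ∫₀^∞ (ν+λ)^{-k-1} f(ν) dν for λ > 0. If 0 is a right Lebesgue point of f with Lebesgue value f_L(0+) (i.e. (1/h)∫₀^h |f(y) − f_L(0+)| dy → 0 as h ↓ 0), then lim_{λ↓0} (T_k f)(λ) = f_L(0+). -/
open MeasureTheory Set Filter

lemma ftc_aux (m : ℕ) (hm : 1 ≤ m) (a b cc : ℝ) (hc : 0 < cc) (hb : 0 < cc * a + b) :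
    ∀ x ∈ Ici a, HasDerivAt (fun t => -((cc * t + b) ^ m)⁻¹ / (m * cc))
      (((cc * x + b) ^ (m + 1))⁻¹) x := by
  intro x hx
  have hpos : 0 < cc * x + b := by
    have : cc * a ≤ cc * x := by nlinarith [hx.out]
    linarith
  have h1 : HasDerivAt (fun t : ℝ => cc * t + b) cc x := by
    simpa using ((hasDerivAt_id x).const_mul cc).add_const b
  have h2 : HasDerivAt (fun t : ℝ => (cc * t + b) ^ m)
      ((m : ℝ) * (cc * x + b) ^ (m - 1) * cc) x := by
    exact h1.fun_pow m
  have hne : (cc * x + b) ^ m ≠ 0 := pow_ne_zero _ hpos.ne'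
  have h3 : HasDerivAt (fun t => -((cc * t + b) ^ m)⁻¹ / (m * cc))
      (-(-((m : ℝ) * (cc * x + b) ^ (m - 1) * cc) / ((cc * x + b) ^ m) ^ 2) / ((m : ℝ) * cc)) x :=
    (h2.inv hne).neg.div_const ((m : ℝ) * cc)
  convert h3 using 1
  have hm' : m - 1 + (m + 1) = 2 * m := by omega
  have hmn : (m : ℝ) ≠ 0 := Nat.cast_ne_zero.mpr (by omega)
  field_simp
  rw [← pow_mul, ← pow_add]
  congr 1
  omega

lemma ftc_tendsto (m : ℕ) (hm : 1 ≤ m) (b cc : ℝ) (hc : 0 < cc) :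
    Tendsto (fun t : ℝ => -((cc * t + b) ^ m)⁻¹ / (m * cc)) atTop (nhds 0) := by
  have h1 : Tendsto (fun t : ℝ => cc * t + b) atTop atTop :=
    tendsto_atTop_add_const_right _ b (tendsto_id.const_mul_atTop hc)
  have h2 : Tendsto (fun t : ℝ => (cc * t + b) ^ m) atTop atTop :=
    (tendsto_pow_atTop (by omega)).comp h1
  have h3 : Tendsto (fun t : ℝ => ((cc * t + b) ^ m)⁻¹) atTop (nhds 0) :=
    h2.inv_tendsto_atTop
  have := (h3.neg.div_const ((m : ℝ) * cc))
  simpa using this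

lemma ftc_intOn (m : ℕ) (hm : 1 ≤ m) (a b cc : ℝ) (hc : 0 < cc) (hb : 0 < cc * a + b) :
    IntegrableOn (fun t => ((cc * t + b) ^ (m + 1))⁻¹) (Ioi a) := by
  refine integrableOn_Ioi_deriv_of_nonneg' (ftc_aux m hm a b cc hc hb) ?_ (ftc_tendsto m hm b cc hc)
  intro x hx
  have hpos : 0 < cc * x + b := by nlinarith [hx.out]
  positivity

lemma ftc_eq (m : ℕ) (hm : 1 ≤ m) (a b cc : ℝ) (hc : 0 < cc) (hb : 0 < cc * a + b) :
    ∫ t in Ioi a, ((cc * t + b) ^ (m + 1))⁻¹ = ((cc * a + b) ^ m)⁻¹ / (m * cc) := by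
  have := integral_Ioi_of_hasDerivAt_of_nonneg' (ftc_aux m hm a b cc hc hb)
    (fun x hx => by
      have hpos : 0 < cc * x + b := by nlinarith [hx.out]
      positivity) (ftc_tendsto m hm b cc hc)
  rw [this]
  ring

set_option maxHeartbeats 1000000 in
lemma integrable_weight (k : ℕ) (f : ℝ → ℝ)
    (hf : IntegrableOn (fun ν => f ν / (ν + 1) ^ (k + 1)) (Ioi 0))
    (hfm : AEStronglyMeasurable f (volume.restrict (Ioi 0)))
    (a lam : ℝ) (ha : 0 ≤ a) (hl : 0 ≤ lam) (hal : 0 < a + lam) :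
    IntegrableOn (fun ν => f ν / (ν + lam) ^ (k + 1)) (Ioi a) := by
  set K : ℝ := max 1 ((a + 1) / (a + lam)) with hK_def
  have hK1 : (1 : ℝ) ≤ K := le_max_left _ _
  have hKr : (a + 1) / (a + lam) ≤ K := le_max_right _ _
  have hKa : a + 1 ≤ K * (a + lam) := by
    rw [div_le_iff₀ hal] at hKr; linarith
  have key : ∀ ν : ℝ, a < ν → ν + 1 ≤ K * (ν + lam) := by
    intro ν hν; nlinarith
  have hsub : Ioi a ⊆ Ioi (0 : ℝ) := Ioi_subset_Ioi ha
  have hdom : IntegrableOn (fun ν => K ^ (k + 1) * (f ν / (ν + 1) ^ (k + 1))) (Ioi a) :=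
    (hf.mono_set hsub).const_mul _
  have hcont : Continuous (fun ν : ℝ => (ν + lam) ^ (k + 1)) :=
    (continuous_id'.add continuous_const).pow (k + 1)
  have hmm : AEStronglyMeasurable f (volume.restrict (Ioi a)) :=
    AEStronglyMeasurable.mono_set hsub hfm
  have hmeas : AEStronglyMeasurable (fun ν => f ν / (ν + lam) ^ (k + 1))
      (volume.restrict (Ioi a)) := by
    simp only [div_eq_mul_inv]
    exact hmm.mul (hcont.measurable.inv.aestronglyMeasurable)
  refine Integrable.mono hdom hmeas ?_
  filter_upwards [ae_restrict_mem measurableSet_Ioi] with ν hν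
  have hν' : a < ν := hν
  have hA : 0 < ν + lam := by linarith
  have hB : 0 < ν + 1 := by linarith
  have hAB : (ν + 1) ^ (k + 1) ≤ K ^ (k + 1) * (ν + lam) ^ (k + 1) := by
    rw [← mul_pow]
    exact pow_le_pow_left₀ hB.le (key ν hν') _
  have hK0 : (0:ℝ) < K := lt_of_lt_of_le one_pos hK1
  have h1 : |f ν / (ν + lam) ^ (k + 1)| = |f ν| / (ν + lam) ^ (k + 1) := by
    rw [abs_div, abs_of_pos (pow_pos hA _)]
  have h2 : |K ^ (k + 1) * (f ν / (ν + 1) ^ (k + 1))|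
      = K ^ (k + 1) * (|f ν| / (ν + 1) ^ (k + 1)) := by
    rw [abs_mul, abs_div, abs_of_pos (pow_pos hB _), abs_of_pos (pow_pos hK0 _)]
  rw [Real.norm_eq_abs, Real.norm_eq_abs, h1, h2, mul_div_assoc',
    div_le_div_iff₀ (pow_pos hA _) (pow_pos hB _)]
  nlinarith [mul_le_mul_of_nonneg_left hAB (abs_nonneg (f ν)), abs_nonneg (f ν),
    pow_pos hA (k+1), pow_pos hB (k+1)]

set_option maxHeartbeats 2000000 in
/-- If f ∈ L¹((0,∞); (ν+1)^{-k-1} dν), k ≥ 1, and 0 is a right Lebesgue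
point of f with value c, then (T_k f)(λ) = k λ^k ∫₀^∞ (ν+λ)^{-k-1} f(ν) dν tends to c
as λ ↓ 0. -/
theorem resolvent_regularization_limit (k : ℕ) (hk : 1 ≤ k) (f : ℝ → ℝ)
    (hf : IntegrableOn (fun ν => f ν / (ν + 1) ^ (k + 1)) (Ioi 0))
    (c : ℝ)
    (hLeb : Tendsto (fun h => (1 / h) * ∫ y in Ioc (0 : ℝ) h, |f y - c|)
      (nhdsWithin 0 (Ioi 0)) (nhds 0)) :
    Tendsto (fun lam => (k : ℝ) * lam ^ k * ∫ ν in Ioi (0 : ℝ), f ν / (ν + lam) ^ (k + 1))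
      (nhdsWithin 0 (Ioi 0)) (nhds c) := by

  classical
  have hkpos : 0 < k := hk
  have hk0 : (0:ℝ) < (k:ℝ) := by exact_mod_cast hkpos
  -- measurability of f on (0,∞)
  have hfm : AEStronglyMeasurable f (volume.restrict (Ioi 0)) := by
    have h2 := hf.aestronglyMeasurable
    have h3 : AEStronglyMeasurable (fun ν => (f ν / (ν + 1) ^ (k + 1)) * (ν + 1) ^ (k + 1))
        (volume.restrict (Ioi 0)) :=
      h2.mul (((continuous_id'.add continuous_const).pow (k + 1)).aestronglyMeasurable)
    refine h3.congr ?_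
    filter_upwards [ae_restrict_mem measurableSet_Ioi] with ν hν
    have : (0:ℝ) < ν := hν
    field_simp
  set g : ℝ → ℝ := fun ν => f ν - c with hgdef
  set G : ℝ → ℝ := fun ν => |f ν - c| with hGdef
  have hgm : AEStronglyMeasurable g (volume.restrict (Ioi 0)) :=
    hfm.sub aestronglyMeasurable_const
  have hGm : AEStronglyMeasurable G (volume.restrict (Ioi 0)) := by
    refine hgm.norm.congr ?_
    filter_upwards with ν
    simp [hgdef, hGdef, Real.norm_eq_abs]
  have hGnonneg : ∀ ν, 0 ≤ G ν := fun ν => abs_nonneg _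
  -- base weighted integrability
  have hconst1 : IntegrableOn (fun ν => c / (ν + 1) ^ (k + 1)) (Ioi 0) := by
    have := (ftc_intOn k hk 0 1 1 one_pos (by norm_num)).const_mul c
    refine IntegrableOn.congr_fun this (fun ν hν => ?_) measurableSet_Ioi
    simp [div_eq_mul_inv]
  have hg1 : IntegrableOn (fun ν => g ν / (ν + 1) ^ (k + 1)) (Ioi 0) := by
    have := hf.sub hconst1
    refine IntegrableOn.congr_fun this (fun ν hν => ?_) measurableSet_Ioi
    simp [hgdef, sub_div]
  have hG1 : IntegrableOn (fun ν => G ν / (ν + 1) ^ (k + 1)) (Ioi 0) := by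
    refine hg1.abs.congr ?_
    filter_upwards [ae_restrict_mem measurableSet_Ioi] with ν hν
    have hν0 : (0:ℝ) < ν := hν
    rw [abs_div, abs_of_pos (by positivity : (0:ℝ) < (ν + 1) ^ (k + 1))]
  have hfw : ∀ lam : ℝ, 0 < lam → IntegrableOn (fun ν => f ν / (ν + lam) ^ (k + 1)) (Ioi 0) :=
    fun lam hl => integrable_weight k f hf hfm 0 lam le_rfl hl.le (by simpa using hl)
  have hGw : ∀ a lam : ℝ, 0 ≤ a → 0 ≤ lam → 0 < a + lam →
      IntegrableOn (fun ν => G ν / (ν + lam) ^ (k + 1)) (Ioi a) :=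
    fun a lam ha hl hal => integrable_weight k G hG1 hGm a lam ha hl hal
  -- normalization integral
  have hNorm : ∀ lam : ℝ, 0 < lam →
      ∫ ν in Ioi (0:ℝ), ((ν + lam) ^ (k + 1))⁻¹ = (lam ^ k)⁻¹ / k := by
    intro lam hl
    have := ftc_eq k hk 0 lam 1 one_pos (by simpa using hl)
    simpa using this
  rw [Metric.tendsto_nhdsWithin_nhds]
  intro ε hε
  set ε' : ℝ := ε / 5 with hε'def
  have hε' : 0 < ε' := by positivity
  obtain ⟨δ₀, hδ₀, H⟩ := Metric.tendsto_nhdsWithin_nhds.1 hLeb ε' hε'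
  set δ' : ℝ := δ₀ / 2 with hδ'def
  have hδ' : 0 < δ' := by positivity
  -- Lebesgue point bound
  have hF : ∀ h : ℝ, 0 < h → h ≤ δ' → (∫ y in Ioc (0:ℝ) h, G y) ≤ ε' * h := by
    intro h h0 hh
    have hd : dist h (0:ℝ) < δ₀ := by
      rw [Real.dist_eq, sub_zero, abs_of_pos h0]; linarith
    have h1 := H (mem_Ioi.2 h0) hd
    rw [Real.dist_eq, sub_zero] at h1
    have hnn : 0 ≤ ∫ y in Ioc (0:ℝ) h, |f y - c| :=
      integral_nonneg fun y => abs_nonneg _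
    rw [abs_of_nonneg (mul_nonneg (by positivity) hnn)] at h1
    have h4 := mul_lt_mul_of_pos_left h1 h0
    have h5 : h * ((1 / h) * ∫ y in Ioc (0:ℝ) h, |f y - c|)
        = ∫ y in Ioc (0:ℝ) h, |f y - c| := by
      field_simp
    rw [h5] at h4
    have : (∫ y in Ioc (0:ℝ) h, G y) = ∫ y in Ioc (0:ℝ) h, |f y - c| := rfl
    rw [this]
    nlinarith
  -- tail constant
  have hCint : IntegrableOn (fun ν => G ν / ν ^ (k + 1)) (Ioi δ') := by
    have := hGw δ' 0 hδ'.le le_rfl (by simpa using hδ')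
    simpa using this
  set C : ℝ := ∫ ν in Ioi δ', G ν / ν ^ (k + 1) with hCdef
  have hC0 : 0 ≤ C :=
    setIntegral_nonneg measurableSet_Ioi fun ν hν =>
      div_nonneg (hGnonneg ν) (pow_nonneg (le_trans hδ'.le (le_of_lt hν)) _)
  -- G integrable (unweighted) near 0
  have hGIoc : IntegrableOn G (Ioc 0 δ') := by
    have hdom : IntegrableOn (fun ν => ((δ' + 1) ^ (k + 1)) * (G ν / (ν + 1) ^ (k + 1)))
        (Ioc 0 δ') :=
      (hG1.mono_set (Ioc_subset_Ioi_self (a := δ') (b := 0))).const_mul _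
    refine Integrable.mono hdom (AEStronglyMeasurable.mono_set Ioc_subset_Ioi_self hGm) ?_
    filter_upwards [ae_restrict_mem measurableSet_Ioc] with ν hν
    have hν0 : (0:ℝ) < ν := hν.1
    have hνδ : ν ≤ δ' := hν.2
    have hB : (0:ℝ) < (ν + 1) ^ (k + 1) := by positivity
    have hBle : (ν + 1) ^ (k + 1) ≤ (δ' + 1) ^ (k + 1) :=
      pow_le_pow_left₀ (by linarith) (by linarith) _
    rw [Real.norm_eq_abs, Real.norm_eq_abs, abs_of_nonneg (hGnonneg ν), abs_mul,
      abs_of_pos (by positivity : (0:ℝ) < (δ' + 1) ^ (k + 1)), abs_div,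
      abs_of_nonneg (hGnonneg ν), abs_of_pos hB, mul_div_assoc', le_div_iff₀ hB]
    nlinarith [hGnonneg ν, mul_le_mul_of_nonneg_left hBle (hGnonneg ν)]
  -- choose the λ-threshold
  refine ⟨min 1 (ε' / ((k : ℝ) * (C + 1))), lt_min one_pos (by positivity), ?_⟩
  intro lam hlam hdist
  have hl0 : (0:ℝ) < lam := hlam
  rw [Real.dist_eq, sub_zero, abs_of_pos hl0] at hdist
  have hlam1 : lam ≤ 1 := (lt_of_lt_of_le hdist (min_le_left _ _)).le
  have hlamε : lam < ε' / ((k : ℝ) * (C + 1)) := lt_of_lt_of_le hdist (min_le_right _ _)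
  have hlk : (0:ℝ) < lam ^ k := by positivity
  set P : ℝ := (k : ℝ) * lam ^ k with hPdef
  have hP0 : 0 < P := by positivity
  -- integrabilities at this λ
  have hIw := hfw lam hl0
  have hCw : IntegrableOn (fun ν => c / (ν + lam) ^ (k + 1)) (Ioi 0) := by
    have := (ftc_intOn k hk 0 lam 1 one_pos (by simpa using hl0)).const_mul c
    refine IntegrableOn.congr_fun this (fun ν hν => ?_) measurableSet_Ioi
    simp [div_eq_mul_inv]
  have hGwl := hGw 0 lam le_rfl hl0.le (by simpa using hl0)
  -- key identity
  have hsplitIg : ∫ ν in Ioi (0:ℝ), g ν / (ν + lam) ^ (k + 1)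
      = (∫ ν in Ioi (0:ℝ), f ν / (ν + lam) ^ (k + 1))
        - ∫ ν in Ioi (0:ℝ), c / (ν + lam) ^ (k + 1) := by
    rw [← integral_sub hIw hCw]
    refine setIntegral_congr_fun measurableSet_Ioi fun ν hν => ?_
    simp [hgdef, sub_div]
  have hcInt : ∫ ν in Ioi (0:ℝ), c / (ν + lam) ^ (k + 1) = c * ((lam ^ k)⁻¹ / k) := by
    have h1 : ∫ ν in Ioi (0:ℝ), c / (ν + lam) ^ (k + 1)
        = c * ∫ ν in Ioi (0:ℝ), ((ν + lam) ^ (k + 1))⁻¹ := by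
      rw [← integral_const_mul]
      refine setIntegral_congr_fun measurableSet_Ioi fun ν hν => ?_
      rw [div_eq_mul_inv]
    rw [h1, hNorm lam hl0]
  have key : P * (∫ ν in Ioi (0:ℝ), f ν / (ν + lam) ^ (k + 1)) - c
      = P * ∫ ν in Ioi (0:ℝ), g ν / (ν + lam) ^ (k + 1) := by
    rw [hsplitIg, hcInt, hPdef]
    field_simp
  -- absolute value estimate
  have habs : |∫ ν in Ioi (0:ℝ), g ν / (ν + lam) ^ (k + 1)|
      ≤ ∫ ν in Ioi (0:ℝ), G ν / (ν + lam) ^ (k + 1) := by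
    have h1 : |∫ ν in Ioi (0:ℝ), g ν / (ν + lam) ^ (k + 1)|
        ≤ ∫ ν in Ioi (0:ℝ), |g ν / (ν + lam) ^ (k + 1)| := by
      have := norm_integral_le_integral_norm (μ := volume.restrict (Ioi 0))
        (fun ν => g ν / (ν + lam) ^ (k + 1))
      simp only [Real.norm_eq_abs] at this
      exact this
    refine h1.trans (le_of_eq ?_)
    refine setIntegral_congr_fun measurableSet_Ioi fun ν hν => ?_
    have hν0 : (0:ℝ) < ν := hν
    rw [abs_div, abs_of_pos (by positivity : (0:ℝ) < (ν + lam) ^ (k + 1))]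
  -- split into near and tail
  have hGtail := hGw δ' lam hδ'.le hl0.le (by linarith)
  have hGnear : IntegrableOn (fun ν => G ν / (ν + lam) ^ (k + 1)) (Ioc 0 δ') :=
    hGwl.mono_set Ioc_subset_Ioi_self
  have hsplit : ∫ ν in Ioi (0:ℝ), G ν / (ν + lam) ^ (k + 1)
      = (∫ ν in Ioc (0:ℝ) δ', G ν / (ν + lam) ^ (k + 1))
        + ∫ ν in Ioi δ', G ν / (ν + lam) ^ (k + 1) := by
    rw [← Ioc_union_Ioi_eq_Ioi hδ'.le,
      setIntegral_union Ioc_disjoint_Ioi_same measurableSet_Ioi hGnear hGtail]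
  -- tail bound
  have htail : ∫ ν in Ioi δ', G ν / (ν + lam) ^ (k + 1) ≤ C := by
    rw [hCdef]
    refine setIntegral_mono_on hGtail hCint measurableSet_Ioi fun ν hν => ?_
    have hν0 : (0:ℝ) < ν := lt_trans hδ' hν
    have h1 : ν ^ (k + 1) ≤ (ν + lam) ^ (k + 1) := pow_le_pow_left₀ hν0.le (by linarith) _
    exact div_le_div_of_nonneg_left (hGnonneg ν) (by positivity) h1
  -- dyadic decomposition of near part
  set S : ℕ → Set ℝ := fun n => Ioc (δ' / 2 ^ (n + 1)) (δ' / 2 ^ n) with hSdef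
  have hSmeas : ∀ n, MeasurableSet (S n) := fun n => measurableSet_Ioc
  have hSsub : ∀ n, S n ⊆ Ioc 0 δ' := by
    intro n x hx
    refine ⟨lt_trans (by positivity) hx.1, hx.2.trans ?_⟩
    apply div_le_self hδ'.le
    have := pow_le_pow_right₀ (by norm_num : (1:ℝ) ≤ 2) (Nat.zero_le n)
    simpa using this
  have hSdisj : Pairwise (Function.onFun Disjoint S) := by
    intro m n hmn
    have key2 : ∀ m n : ℕ, m < n → Disjoint (S m) (S n) := by
      intro m n h
      simp only [hSdef]
      rw [Set.Ioc_disjoint_Ioc]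
      refine le_trans (min_le_right _ _) (le_trans ?_ (le_max_left _ _))
      apply div_le_div_of_nonneg_left hδ'.le (by positivity)
      exact pow_le_pow_right₀ (by norm_num) h
    rcases lt_or_gt_of_ne hmn with h | h
    · exact key2 m n h
    · exact (key2 n m h).symm
  have hSunion : (⋃ n, S n) = Ioc 0 δ' := by
    refine subset_antisymm (iUnion_subset hSsub) ?_
    rintro x ⟨hx0, hxδ⟩
    have hex : ∃ n : ℕ, δ' / 2 ^ (n + 1) < x := by
      obtain ⟨n, hn⟩ := pow_unbounded_of_one_lt (δ' / x) (one_lt_two (α := ℝ))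
      refine ⟨n, ?_⟩
      rw [div_lt_iff₀ hx0] at hn
      rw [div_lt_iff₀ (by positivity : (0:ℝ) < 2 ^ (n + 1))]
      have h2 : (2:ℝ) ^ n ≤ 2 ^ (n + 1) := pow_le_pow_right₀ (by norm_num) (Nat.le_succ n)
      nlinarith
    refine mem_iUnion.2 ⟨Nat.find hex, Nat.find_spec hex, ?_⟩
    rcases Nat.eq_zero_or_pos (Nat.find hex) with h0 | hpos
    · rw [h0]; simpa using hxδ
    · have := Nat.find_min hex (Nat.sub_lt hpos one_pos)
      push_neg at this
      have heq : Nat.find hex - 1 + 1 = Nat.find hex := Nat.succ_pred_eq_of_pos hpos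
      rwa [heq] at this
  -- the comparison kernel φ
  set φ : ℝ → ℝ := fun t => ((2⁻¹ * t + lam) ^ (k + 1))⁻¹ with hφdef
  have hφint : IntegrableOn φ (Ioi 0) :=
    ftc_intOn k hk 0 lam 2⁻¹ (by norm_num) (by simpa using hl0)
  have hφIoc : IntegrableOn φ (Ioc 0 δ') := hφint.mono_set Ioc_subset_Ioi_self
  have hφnonneg : ∀ t : ℝ, 0 < t → 0 ≤ φ t := by
    intro t ht
    have : 0 < 2⁻¹ * t + lam := by positivity
    positivity
  have hHS1 : HasSum (fun n => ∫ ν in S n, G ν / (ν + lam) ^ (k + 1))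
      (∫ ν in Ioc (0:ℝ) δ', G ν / (ν + lam) ^ (k + 1)) := by
    have := hasSum_integral_iUnion hSmeas hSdisj
      (f := fun ν => G ν / (ν + lam) ^ (k + 1)) (by rw [hSunion]; exact hGnear)
    rwa [hSunion] at this
  have hHS2 : HasSum (fun n => 2 * ε' * ∫ ν in S n, φ ν)
      (2 * ε' * ∫ ν in Ioc (0:ℝ) δ', φ ν) := by
    have := hasSum_integral_iUnion hSmeas hSdisj (f := φ) (by rw [hSunion]; exact hφIoc)
    rw [hSunion] at this
    exact this.mul_left _
  -- term-by-term bound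
  have hterm : ∀ n : ℕ, (∫ ν in S n, G ν / (ν + lam) ^ (k + 1))
      ≤ 2 * ε' * ∫ ν in S n, φ ν := by
    intro n
    set a : ℝ := δ' / 2 ^ (n + 1) with hadef
    set b : ℝ := δ' / 2 ^ n with hbdef
    have ha0 : 0 < a := by positivity
    have hb0 : 0 < b := by positivity
    have hba : b = 2 * a := by
      rw [hadef, hbdef, pow_succ]
      field_simp
    have hbδ : b ≤ δ' := by
      apply div_le_self hδ'.le
      have := pow_le_pow_right₀ (by norm_num : (1:ℝ) ≤ 2) (Nat.zero_le n)
      simpa using this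
    have hSn : S n = Ioc a b := rfl
    have hcst : (0:ℝ) < ((a + lam) ^ (k + 1))⁻¹ := by positivity
    have hGSn : IntegrableOn (fun ν => G ν / (ν + lam) ^ (k + 1)) (S n) :=
      hGwl.mono_set ((hSsub n).trans Ioc_subset_Ioi_self)
    have hGb : IntegrableOn G (Ioc 0 b) :=
      hGIoc.mono_set (Ioc_subset_Ioc le_rfl hbδ)
    have hGab : IntegrableOn G (Ioc a b) :=
      hGb.mono_set (Ioc_subset_Ioc ha0.le le_rfl)
    have step1 : (∫ ν in S n, G ν / (ν + lam) ^ (k + 1))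
        ≤ ∫ ν in S n, G ν * ((a + lam) ^ (k + 1))⁻¹ := by
      rw [hSn]
      refine setIntegral_mono_on (hSn ▸ hGSn) (hGab.mul_const _) measurableSet_Ioc
        fun ν hν => ?_
      have hν0 : 0 < ν := lt_trans ha0 hν.1
      rw [div_eq_mul_inv]
      refine mul_le_mul_of_nonneg_left ?_ (hGnonneg ν)
      refine inv_anti₀ (by positivity) ?_
      exact pow_le_pow_left₀ (by linarith) (by linarith [hν.1.le]) _
    have step2 : (∫ ν in S n, G ν * ((a + lam) ^ (k + 1))⁻¹)
        = (∫ ν in S n, G ν) * ((a + lam) ^ (k + 1))⁻¹ := by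
      rw [hSn, integral_mul_const]
    have step3 : (∫ ν in S n, G ν) ≤ ε' * b := by
      refine le_trans ?_ (hF b hb0 hbδ)
      rw [hSn]
      refine setIntegral_mono_set hGb ?_ ?_
      · filter_upwards [ae_restrict_mem measurableSet_Ioc] with ν hν
        exact hGnonneg ν
      · exact HasSubset.Subset.eventuallyLE (Ioc_subset_Ioc ha0.le le_rfl)
    have step4 : a * ((a + lam) ^ (k + 1))⁻¹ ≤ ∫ ν in S n, φ ν := by
      have hconst : (∫ ν in Ioc a b, (fun _ => ((a + lam) ^ (k + 1))⁻¹) ν)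
          = (b - a) * ((a + lam) ^ (k + 1))⁻¹ := by
        rw [setIntegral_const, measureReal_def, Real.volume_Ioc, ENNReal.toReal_ofReal (by linarith), smul_eq_mul]
      have hmono : (∫ ν in Ioc a b, (fun _ => ((a + lam) ^ (k + 1))⁻¹) ν)
          ≤ ∫ ν in Ioc a b, φ ν := by
        refine setIntegral_mono_on (integrableOn_const measure_Ioc_lt_top.ne)
          (hφint.mono_set ((hSsub n).trans Ioc_subset_Ioi_self)) measurableSet_Ioc
          fun ν hν => ?_
        have hν0 : 0 < ν := lt_trans ha0 hν.1
        have h2ν : 0 < 2⁻¹ * ν + lam := by nlinarith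
        have hνb : ν ≤ b := hν.2
        have h2a : 2⁻¹ * ν + lam ≤ a + lam := by
          rw [hba] at hνb; linarith
        rw [hφdef]
        exact inv_anti₀ (pow_pos h2ν _) (pow_le_pow_left₀ h2ν.le h2a _)
      rw [hSn]
      calc a * ((a + lam) ^ (k + 1))⁻¹ = (b - a) * ((a + lam) ^ (k + 1))⁻¹ := by
            rw [hba]; ring
        _ = _ := hconst.symm
        _ ≤ _ := hmono
    calc (∫ ν in S n, G ν / (ν + lam) ^ (k + 1))
        ≤ (∫ ν in S n, G ν) * ((a + lam) ^ (k + 1))⁻¹ := step2 ▸ step1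
      _ ≤ (ε' * b) * ((a + lam) ^ (k + 1))⁻¹ :=
          mul_le_mul_of_nonneg_right step3 hcst.le
      _ = 2 * ε' * (a * ((a + lam) ^ (k + 1))⁻¹) := by rw [hba]; ring
      _ ≤ 2 * ε' * ∫ ν in S n, φ ν :=
          mul_le_mul_of_nonneg_left step4 (by positivity)
  have hnear : (∫ ν in Ioc (0:ℝ) δ', G ν / (ν + lam) ^ (k + 1))
      ≤ 2 * ε' * ∫ ν in Ioc (0:ℝ) δ', φ ν := hasSum_le hterm hHS1 hHS2
  have hφbound : (∫ ν in Ioc (0:ℝ) δ', φ ν) ≤ (lam ^ k)⁻¹ / (k * 2⁻¹) := by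
    have h1 : (∫ ν in Ioc (0:ℝ) δ', φ ν) ≤ ∫ ν in Ioi (0:ℝ), φ ν := by
      refine setIntegral_mono_set hφint ?_ ?_
      · filter_upwards [ae_restrict_mem measurableSet_Ioi] with ν hν
        exact hφnonneg ν hν
      · exact HasSubset.Subset.eventuallyLE Ioc_subset_Ioi_self
    have h2 := ftc_eq k hk 0 lam 2⁻¹ (by norm_num) (by simpa using hl0)
    rw [hφdef]
    refine h1.trans (le_of_eq ?_)
    rw [h2]
    norm_num
  -- final assembly
  rw [Real.dist_eq]
  have hPC : P * C < ε' := by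
    have h1 : lam ^ k ≤ lam := by
      calc lam ^ k ≤ lam ^ 1 := pow_le_pow_of_le_one hl0.le hlam1 hk
        _ = lam := pow_one lam
    have h2 : P * C ≤ (k : ℝ) * lam * (C + 1) := by
      rw [hPdef]
      nlinarith [mul_le_mul_of_nonneg_left (mul_le_mul_of_nonneg_right h1 hC0) hk0.le,
        mul_nonneg hk0.le hl0.le]
    have h3 : (k : ℝ) * lam * (C + 1) < ε' := by
      have hd : (0:ℝ) < (k : ℝ) * (C + 1) := by positivity
      rw [lt_div_iff₀ hd] at hlamε
      nlinarith
    linarith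
  have main : |P * (∫ ν in Ioi (0:ℝ), f ν / (ν + lam) ^ (k + 1)) - c| < ε := by
    rw [key, abs_mul, abs_of_pos hP0]
    have chain : P * |∫ ν in Ioi (0:ℝ), g ν / (ν + lam) ^ (k + 1)|
        ≤ P * (2 * ε' * ((lam ^ k)⁻¹ / (k * 2⁻¹)) + C) := by
      refine mul_le_mul_of_nonneg_left ?_ hP0.le
      calc |∫ ν in Ioi (0:ℝ), g ν / (ν + lam) ^ (k + 1)|
          ≤ ∫ ν in Ioi (0:ℝ), G ν / (ν + lam) ^ (k + 1) := habs
        _ = _ + _ := hsplit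
        _ ≤ (2 * ε' * ∫ ν in Ioc (0:ℝ) δ', φ ν) + C := add_le_add hnear htail
        _ ≤ 2 * ε' * ((lam ^ k)⁻¹ / (k * 2⁻¹)) + C :=
            add_le_add_left
              (mul_le_mul_of_nonneg_left hφbound (by positivity : (0:ℝ) ≤ 2 * ε')) C
    have heq4 : P * (2 * ε' * ((lam ^ k)⁻¹ / (k * 2⁻¹)) + C) = 4 * ε' + P * C := by
      rw [hPdef]
      field_simp
      ring
    rw [heq4] at chain
    have : P * |∫ ν in Ioi (0:ℝ), g ν / (ν + lam) ^ (k + 1)| < 5 * ε' := by linarith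
    calc P * |∫ ν in Ioi (0:ℝ), g ν / (ν + lam) ^ (k + 1)| < 5 * ε' := this
      _ = ε := by rw [hε'def]; ring
  -- `P*|...|` majorizes nothing: conclude
  -- goal: |(k:ℝ) * lam^k * ∫ ... - c| < ε
  simpa [hPdef, abs_sub_comm] using main
end

section
/- Abelian theorem for Laplace transforms: let ξ: (0,∞) → ℝ be locally integrable with ∫₀^∞ |ξ(s)| e^{-ts} ds < ∞ for all t > 0, and suppose lim_{r↓0} (1/r) ∫₀^r ξ(s) ds = c. Then lim_{t→∞} t ∫₀^∞ e^{-ts} ξ(s) ds = c. -/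
open MeasureTheory Set Filter

lemma abelian_exp_tendsto_zero {t : ℝ} (ht : 0 < t) :
    Tendsto (fun u : ℝ => Real.exp (-t * u)) atTop (nhds 0) :=
  Real.tendsto_exp_atBot.comp (tendsto_id.const_mul_atTop_of_neg (neg_neg_iff_pos.2 ht))

lemma abelian_mul_exp_tendsto_zero {t : ℝ} (ht : 0 < t) :
    Tendsto (fun u : ℝ => u * Real.exp (-t * u)) atTop (nhds 0) := by
  have h := (Real.tendsto_pow_mul_exp_neg_atTop_nhds_zero 1).comp
    (tendsto_id.const_mul_atTop ht : Tendsto (fun u : ℝ => t * u) atTop atTop)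
  have h2 := h.div_const t
  simp only [Function.comp_def, pow_one, zero_div] at h2
  refine h2.congr fun u => ?_
  rw [neg_mul]
  field_simp

lemma abelian_lemA {t : ℝ} (ht : 0 < t) (a : ℝ) :
    ∫ u in Ioi a, Real.exp (-t * u) = Real.exp (-t * a) / t := by
  have h : ∀ x ∈ Ici a, HasDerivAt (fun u => -Real.exp (-t * u) / t) (Real.exp (-t * x)) x := by
    intro x _
    have : HasDerivAt (fun u => -t * u) (-t) x := by
      simpa using (hasDerivAt_id x).const_mul (-t)
    have := (this.exp.neg.div_const t)
    refine this.congr_deriv ?_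
    field_simp
  have := MeasureTheory.integral_Ioi_of_hasDerivAt_of_tendsto' h
    (exp_neg_integrableOn_Ioi a ht)
    (by simpa using ((abelian_exp_tendsto_zero ht).neg.div_const t))
  simp only [neg_mul] at this ⊢
  rw [this]; ring

lemma abelian_lemB_int {t : ℝ} (ht : 1 < t) :
    IntegrableOn (fun u => u * Real.exp (-t * u)) (Ioi (0:ℝ)) := by
  have h0 : (0:ℝ) < t - 1 := by linarith
  refine Integrable.mono' (exp_neg_integrableOn_Ioi 0 h0)
    ((measurable_id.mul ((measurable_id.const_mul (-t)).exp)).aestronglyMeasurable) ?_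
  filter_upwards [ae_restrict_mem measurableSet_Ioi] with u hu
  have hu0 : (0:ℝ) < u := hu
  have h1 : u ≤ Real.exp u := (Real.add_one_le_exp u).trans' (by linarith)
  have : |u * Real.exp (-t * u)| = u * Real.exp (-t * u) := by
    rw [abs_of_nonneg]; positivity
  rw [Real.norm_eq_abs, this]
  calc u * Real.exp (-t * u) ≤ Real.exp u * Real.exp (-t * u) := by
        exact mul_le_mul_of_nonneg_right h1 (Real.exp_pos _).le
    _ = Real.exp (-(t-1) * u) := by rw [← Real.exp_add]; ring_nf

lemma abelian_lemB {t : ℝ} (ht : 1 < t) :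
    ∫ u in Ioi (0:ℝ), u * Real.exp (-t * u) = 1 / t ^ 2 := by
  have ht0 : (0:ℝ) < t := by linarith
  have h : ∀ x ∈ Ici (0:ℝ), HasDerivAt (fun u => -((u / t + 1 / t ^ 2) * Real.exp (-t * u)))
      (x * Real.exp (-t * x)) x := by
    intro x _
    have h1 : HasDerivAt (fun u : ℝ => u / t + 1 / t ^ 2) (1 / t) x := by
      have := ((hasDerivAt_id x).div_const t).add_const (1 / t ^ 2)
      simp only [id] at this
      convert this using 1
    have h2 : HasDerivAt (fun u : ℝ => Real.exp (-t * u)) (-t * Real.exp (-t * x)) x := by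
      have : HasDerivAt (fun u : ℝ => -t * u) (-t) x := by
        simpa using (hasDerivAt_id x).const_mul (-t)
      simpa [mul_comm] using this.exp
    have := (h1.mul h2).neg
    refine this.congr_deriv ?_
    field_simp
    ring
  have hlim : Tendsto (fun u => -((u / t + 1 / t ^ 2) * Real.exp (-t * u))) atTop (nhds 0) := by
    have : Tendsto (fun u => (u / t + 1 / t ^ 2) * Real.exp (-t * u)) atTop (nhds 0) := by
      have h1 := (abelian_mul_exp_tendsto_zero ht0).div_const t
      have h2 := (abelian_exp_tendsto_zero ht0).const_mul (1 / t ^ 2)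
      have := h1.add h2
      simp only [zero_div, mul_zero, add_zero, zero_add] at this
      refine this.congr fun u => by ring
    simpa using this.neg
  have := MeasureTheory.integral_Ioi_of_hasDerivAt_of_tendsto' h (abelian_lemB_int ht) hlim
  rw [this]
  simp

lemma abelian_tailb {K d t : ℝ} (hK0 : 0 ≤ K) (ht2 : 2 ≤ t) :
    t ^ 2 * (K * (Real.exp (-(t-1) * d) / (t-1)))
      ≤ K * Real.exp d * 2 * (t * Real.exp (-d * t)) := by
  have htm1 : (0:ℝ) < t - 1 := by linarith
  have he : Real.exp (-(t-1) * d) = Real.exp d * Real.exp (-d * t) := by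
    rw [← Real.exp_add, (by ring : d + -d * t = -(t-1) * d)]
  have hq : t ^ 2 / (t - 1) ≤ 2 * t := by
    rw [div_le_iff₀ htm1]
    nlinarith
  have h0 : 0 ≤ Real.exp d * Real.exp (-d * t) * K := by positivity
  calc t ^ 2 * (K * (Real.exp (-(t-1) * d) / (t-1)))
      = (t ^ 2 / (t-1)) * (Real.exp d * Real.exp (-d * t) * K) := by
        rw [he]; field_simp
    _ ≤ (2 * t) * (Real.exp d * Real.exp (-d * t) * K) :=
        mul_le_mul_of_nonneg_right hq h0
    _ = K * Real.exp d * 2 * (t * Real.exp (-d * t)) := by ring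

lemma abelian_keyFubini (ξ : ℝ → ℝ) (hmeas : Measurable ξ)
    (hint : ∀ t > (0 : ℝ), IntegrableOn (fun s => Real.exp (-t * s) * |ξ s|) (Ioi 0))
    {t : ℝ} (ht : 0 < t) :
    ∫ s in Ioi (0:ℝ), Real.exp (-t * s) * ξ s
      = t * ∫ u in Ioi (0:ℝ), Real.exp (-t * u) * (∫ s in Ioc (0:ℝ) u, ξ s) := by
  set μ := volume.restrict (Ioi (0:ℝ)) with hμ
  set g : ℝ → ℝ → ℝ := fun s u => if s < u then Real.exp (-t * u) * ξ s else 0 with hg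
  have hgm : Measurable (Function.uncurry g) := by
    apply Measurable.ite (measurableSet_lt measurable_fst measurable_snd)
    · exact ((measurable_snd.const_mul (-t)).exp).mul (hmeas.comp measurable_fst)
    · exact measurable_const
  have hgind : ∀ s, g s = (Ioi s).indicator (fun u => Real.exp (-t * u) * ξ s) := by
    intro s; funext u
    simp [hg, indicator_apply, mem_Ioi]
  have hgind2 : ∀ u, (fun s => g s u) = (Iio u).indicator (fun s => Real.exp (-t * u) * ξ s) := by
    intro u; funext s
    simp [hg, indicator_apply, mem_Iio]
  have h1 : ∀ᵐ s ∂μ, Integrable (g s) μ := by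
    filter_upwards [ae_restrict_mem measurableSet_Ioi] with s hs
    rw [hgind s]
    rw [integrable_indicator_iff measurableSet_Ioi]
    have : IntegrableOn (fun u => Real.exp (-t * u) * ξ s) (Ioi s) :=
      (exp_neg_integrableOn_Ioi s ht).mul_const (ξ s)
    rw [IntegrableOn, hμ, Measure.restrict_restrict measurableSet_Ioi]
    rw [Ioi_inter_Ioi]
    simpa [(show (0:ℝ) < s from hs).le, IntegrableOn] using this
  have hnorm : ∀ᵐ s ∂μ, (∫ u, ‖g s u‖ ∂μ) = Real.exp (-t * s) * |ξ s| / t := by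
    filter_upwards [ae_restrict_mem measurableSet_Ioi] with s hs
    have : (fun u => ‖g s u‖) = (Ioi s).indicator (fun u => Real.exp (-t * u) * |ξ s|) := by
      funext u
      by_cases h : s < u <;>
        simp [hg, h, indicator_apply, mem_Ioi, abs_mul, abs_of_pos (Real.exp_pos _)]
    rw [this, integral_indicator measurableSet_Ioi, hμ,
      Measure.restrict_restrict measurableSet_Ioi, Ioi_inter_Ioi]
    rw [sup_of_le_left (le_of_lt hs)]
    rw [integral_mul_const, abelian_lemA ht s]
    ring
  have h2 : Integrable (fun s => ∫ u, ‖g s u‖ ∂μ) μ := by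
    refine Integrable.congr ?_ (hnorm.mono fun s h => h.symm)
    exact ((hint t ht).div_const t)
  have hG : Integrable (Function.uncurry g) (μ.prod μ) :=
    (integrable_prod_iff hgm.aestronglyMeasurable).2 ⟨h1, h2⟩
  have swap := integral_integral_swap hG
  have hLHS : (∫ s, ∫ u, g s u ∂μ ∂μ) = ∫ s in Ioi (0:ℝ), Real.exp (-t * s) * ξ s / t := by
    refine integral_congr_ae ?_
    filter_upwards [ae_restrict_mem measurableSet_Ioi] with s hs
    rw [hgind s, integral_indicator measurableSet_Ioi, hμ,
      Measure.restrict_restrict measurableSet_Ioi, Ioi_inter_Ioi,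
      sup_of_le_left (le_of_lt hs), integral_mul_const, abelian_lemA ht s]
    ring
  have hRHS : (∫ u, ∫ s, g s u ∂μ ∂μ) = ∫ u in Ioi (0:ℝ),
      Real.exp (-t * u) * (∫ s in Ioc (0:ℝ) u, ξ s) := by
    refine integral_congr_ae ?_
    filter_upwards [ae_restrict_mem measurableSet_Ioi] with u hu
    rw [hgind2 u, integral_indicator measurableSet_Iio, hμ,
      Measure.restrict_restrict measurableSet_Iio]
    have hset : Iio u ∩ Ioi 0 = Ioo (0:ℝ) u := by
      ext x; simp [mem_Ioo, mem_Iio, mem_Ioi, and_comm]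
    rw [hset, integral_const_mul]
    congr 1
    exact setIntegral_congr_set Ioo_ae_eq_Ioc
  rw [hLHS, hRHS] at swap
  rw [← swap]
  rw [integral_div]
  field_simp
  rfl

/-- Abelian theorem for Laplace transforms: if the averages
(1/r)∫₀^r ξ(s) ds tend to c as r ↓ 0, then t ∫₀^∞ e^{-ts} ξ(s) ds → c as t → ∞. -/
theorem abelian_laplace (ξ : ℝ → ℝ) (hmeas : Measurable ξ)
    (hint : ∀ t > (0 : ℝ), IntegrableOn (fun s => Real.exp (-t * s) * |ξ s|) (Ioi 0))
    (c : ℝ)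
    (havg : Tendsto (fun r => (1 / r) * ∫ s in Ioc (0 : ℝ) r, ξ s)
      (nhdsWithin 0 (Ioi 0)) (nhds c)) :
    Tendsto (fun t => t * ∫ s in Ioi (0 : ℝ), Real.exp (-t * s) * ξ s)
      atTop (nhds c) := by
  set F : ℝ → ℝ := fun u => ∫ s in Ioc (0:ℝ) u, ξ s with hF
  set C : ℝ := ∫ s in Ioi (0:ℝ), Real.exp (-1 * s) * |ξ s| with hC
  have hC0 : 0 ≤ C := setIntegral_nonneg measurableSet_Ioi fun s _ => by positivity
  -- ξ is integrable on (0, M] for every M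
  have hξM : ∀ M : ℝ, IntegrableOn ξ (Ioc 0 M) := by
    intro M
    rcases le_or_gt M 0 with h | h
    · rw [Ioc_eq_empty (by simpa using h.not_gt)]; exact integrableOn_empty
    · refine Integrable.mono'
        (((hint 1 one_pos).mono_set Ioc_subset_Ioi_self).const_mul (Real.exp M))
        hmeas.aestronglyMeasurable ?_
      filter_upwards [ae_restrict_mem measurableSet_Ioc] with s hs
      rw [Real.norm_eq_abs]
      have h1 : (1:ℝ) ≤ Real.exp M * Real.exp (-1 * s) := by
        rw [← Real.exp_add]
        refine Real.one_le_exp ?_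
        have := hs.2
        linarith
      calc |ξ s| = 1 * |ξ s| := by ring
        _ ≤ (Real.exp M * Real.exp (-1 * s)) * |ξ s| :=
            mul_le_mul_of_nonneg_right h1 (abs_nonneg _)
        _ = Real.exp M * (Real.exp (-1 * s) * |ξ s|) := by ring
  -- F is continuous
  have hindint : ∀ a b : ℝ, IntervalIntegrable ((Ioi (0:ℝ)).indicator ξ) volume a b := by
    intro a b
    rw [intervalIntegrable_iff]
    rw [IntegrableOn, integrable_indicator_iff measurableSet_Ioi, IntegrableOn,
      Measure.restrict_restrict measurableSet_Ioi]
    refine (hξM (|a| + |b|)).mono_set ?_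
    rintro x ⟨hx1, hx2⟩
    refine ⟨hx1, ?_⟩
    rcases hx2 with hx2
    have := hx2.2
    calc x ≤ a ⊔ b := this
      _ ≤ |a| + |b| := sup_le ((le_abs_self a).trans (by linarith [abs_nonneg b]))
          ((le_abs_self b).trans (by linarith [abs_nonneg a]))
  have hFeq : ∀ u, F u = ∫ s in (0:ℝ)..u, (Ioi (0:ℝ)).indicator ξ s := by
    intro u
    rcases le_or_gt 0 u with h | h
    · rw [intervalIntegral.integral_of_le h, setIntegral_indicator measurableSet_Ioi]
      have : Ioc (0:ℝ) u ∩ Ioi 0 = Ioc 0 u := inter_eq_left.2 fun x hx => hx.1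
      rw [this]
    · rw [intervalIntegral.integral_of_ge h.le, setIntegral_indicator measurableSet_Ioi]
      have h1 : Ioc u 0 ∩ Ioi (0:ℝ) = ∅ := by
        ext x; simp only [mem_inter_iff, mem_Ioc, mem_Ioi, mem_empty_iff_false, iff_false]
        rintro ⟨⟨_, hx2⟩, hx3⟩; exact absurd hx3 (not_lt.2 hx2)
      have h2 : Ioc (0:ℝ) u = ∅ := Ioc_eq_empty (by simpa using h.le.not_gt)
      rw [h1]
      show (∫ s in Ioc (0:ℝ) u, ξ s) = -∫ x in (∅:Set ℝ), ξ x
      rw [h2]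
      simp
  have hFcont : Continuous F := by
    rw [show F = fun u => ∫ s in (0:ℝ)..u, (Ioi (0:ℝ)).indicator ξ s from funext hFeq]
    exact intervalIntegral.continuous_primitive hindint 0
  -- bound on F
  have hFb : ∀ u : ℝ, |F u| ≤ Real.exp u * C := by
    intro u
    rcases le_or_gt u 0 with h | h
    · have : F u = 0 := by
        rw [hF]; simp only []
        rw [Ioc_eq_empty (by simpa using h.not_gt)]
        simp
      rw [this, abs_zero]
      positivity
    · have h1 : |F u| ≤ ∫ s in Ioc (0:ℝ) u, |ξ s| := by
        have := MeasureTheory.norm_integral_le_integral_norm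
          (μ := volume.restrict (Ioc (0:ℝ) u)) ξ
        simpa [Real.norm_eq_abs] using this
      have h2 : (∫ s in Ioc (0:ℝ) u, |ξ s|)
          ≤ ∫ s in Ioc (0:ℝ) u, Real.exp u * (Real.exp (-1 * s) * |ξ s|) := by
        refine setIntegral_mono_on (hξM u).abs
          (((hint 1 one_pos).mono_set Ioc_subset_Ioi_self).const_mul (Real.exp u))
          measurableSet_Ioc ?_
        intro s hs
        have h3 : (1:ℝ) ≤ Real.exp u * Real.exp (-1 * s) := by
          rw [← Real.exp_add]
          refine Real.one_le_exp ?_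
          have := hs.2
          linarith
        calc |ξ s| = 1 * |ξ s| := by ring
          _ ≤ (Real.exp u * Real.exp (-1 * s)) * |ξ s| :=
              mul_le_mul_of_nonneg_right h3 (abs_nonneg _)
          _ = Real.exp u * (Real.exp (-1 * s) * |ξ s|) := by ring
      have h3 : (∫ s in Ioc (0:ℝ) u, Real.exp u * (Real.exp (-1 * s) * |ξ s|))
          = Real.exp u * ∫ s in Ioc (0:ℝ) u, Real.exp (-1 * s) * |ξ s| := integral_const_mul _ _
      have h4 : (∫ s in Ioc (0:ℝ) u, Real.exp (-1 * s) * |ξ s|) ≤ C := by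
        rw [hC]
        refine setIntegral_mono_set (hint 1 one_pos) ?_
          (HasSubset.Subset.eventuallyLE Ioc_subset_Ioi_self)
        filter_upwards with s
        positivity
      calc |F u| ≤ _ := h1
        _ ≤ _ := h2
        _ = _ := h3
        _ ≤ Real.exp u * C := mul_le_mul_of_nonneg_left h4 (Real.exp_pos u).le
  -- the main estimate, via ε
  rw [Metric.tendsto_atTop]
  intro ε hε
  -- choose δ from the average hypothesis
  rw [Metric.tendsto_nhdsWithin_nhds] at havg
  obtain ⟨δ, hδpos, hδ⟩ := havg (ε/4) (by linarith)
  set δ' : ℝ := δ / 2 with hδ'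
  have hδ'pos : 0 < δ' := by positivity
  have hsmall : ∀ u ∈ Ioc (0:ℝ) δ', |F u - c * u| ≤ ε/4 * u := by
    intro u hu
    have hu0 : 0 < u := hu.1
    have hud : dist u 0 < δ := by
      rw [Real.dist_eq, sub_zero, abs_of_pos hu0]
      have := hu.2
      rw [hδ'] at this
      linarith
    have := hδ (mem_Ioi.2 hu0) hud
    rw [Real.dist_eq] at this
    have heq : F u - c * u = u * ((1/u) * F u - c) := by
      field_simp
    rw [heq, abs_mul, abs_of_pos hu0]
    exact mul_le_mul_of_nonneg_left this.le hu0.le |>.trans_eq (by ring)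
  -- the tail bound tends to zero
  set K : ℝ := C + |c| with hK
  have hK0 : 0 ≤ K := by positivity
  have htail : Tendsto (fun t : ℝ => K * Real.exp δ' * 2 * (t * Real.exp (-δ' * t)))
      atTop (nhds 0) := by
    simpa using (abelian_mul_exp_tendsto_zero hδ'pos).const_mul (K * Real.exp δ' * 2)
  rw [Metric.tendsto_atTop] at htail
  obtain ⟨T, hT⟩ := htail (ε/2) (by linarith)
  refine ⟨max 2 (max T 2), fun t htN => ?_⟩
  have ht2 : (2:ℝ) ≤ t := le_trans (le_max_left _ _) htN
  have ht1 : (1:ℝ) < t := by linarith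
  have ht0 : (0:ℝ) < t := by linarith
  have htm1 : (0:ℝ) < t - 1 := by linarith
  have hTt : T ≤ t := le_trans ((le_max_left T 2).trans (le_max_right 2 (max T 2))) htN
  -- integrability facts
  have IF : IntegrableOn (fun u => Real.exp (-t * u) * F u) (Ioi (0:ℝ)) := by
    refine Integrable.mono' ((exp_neg_integrableOn_Ioi 0 htm1).const_mul C)
      ((Real.continuous_exp.comp (continuous_const.mul continuous_id)).mul
        hFcont).aestronglyMeasurable ?_
    filter_upwards [ae_restrict_mem measurableSet_Ioi] with u hu
    rw [Real.norm_eq_abs, abs_mul, abs_of_pos (Real.exp_pos _)]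
    calc Real.exp (-t * u) * |F u| ≤ Real.exp (-t * u) * (Real.exp u * C) :=
          mul_le_mul_of_nonneg_left (hFb u) (Real.exp_pos _).le
      _ = C * Real.exp (-(t-1) * u) := by
          rw [← mul_assoc, ← Real.exp_add, (by ring : -t * u + u = -(t-1) * u)]
          ring
  have Ilin : IntegrableOn (fun u => Real.exp (-t * u) * (c * u)) (Ioi (0:ℝ)) := by
    refine ((abelian_lemB_int ht1).const_mul c).congr ?_
    filter_upwards with u
    ring
  have Isub : IntegrableOn (fun u => Real.exp (-t * u) * (F u - c * u)) (Ioi (0:ℝ)) := by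
    refine (IF.sub Ilin).congr ?_
    filter_upwards with u
    simp only [Pi.sub_apply]
    ring
  have Iabs : IntegrableOn (fun u => Real.exp (-t * u) * |F u - c * u|) (Ioi (0:ℝ)) := by
    refine Isub.abs.congr ?_
    filter_upwards with u
    rw [abs_mul, abs_of_pos (Real.exp_pos _)]
  -- the identity
  have hkey := abelian_keyFubini ξ hmeas hint ht0
  have hclin : (∫ u in Ioi (0:ℝ), Real.exp (-t * u) * (c * u)) = c / t ^ 2 := by
    have : (fun u => Real.exp (-t * u) * (c * u)) = fun u => c * (u * Real.exp (-t * u)) := by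
      funext u; ring
    rw [this, integral_const_mul, abelian_lemB ht1]
    ring
  have hdiff : t * (∫ s in Ioi (0:ℝ), Real.exp (-t * s) * ξ s) - c
      = t ^ 2 * ∫ u in Ioi (0:ℝ), Real.exp (-t * u) * (F u - c * u) := by
    have hsub : (∫ u in Ioi (0:ℝ), Real.exp (-t * u) * (F u - c * u))
        = (∫ u in Ioi (0:ℝ), Real.exp (-t * u) * F u)
          - ∫ u in Ioi (0:ℝ), Real.exp (-t * u) * (c * u) := by
      rw [← integral_sub IF Ilin]
      congr 1; funext u; ring
    rw [hsub, hclin, hkey]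
    field_simp
    ring
  -- split the integral
  have hsplit : (∫ u in Ioi (0:ℝ), Real.exp (-t * u) * |F u - c * u|)
      = (∫ u in Ioc (0:ℝ) δ', Real.exp (-t * u) * |F u - c * u|)
        + ∫ u in Ioi δ', Real.exp (-t * u) * |F u - c * u| := by
    rw [← setIntegral_union (Ioc_disjoint_Ioi le_rfl) measurableSet_Ioi
      (Iabs.mono_set Ioc_subset_Ioi_self)
      (Iabs.mono_set (Ioi_subset_Ioi hδ'pos.le)),
      Ioc_union_Ioi_eq_Ioi hδ'pos.le]
  -- first piece
  have hpiece1 : (∫ u in Ioc (0:ℝ) δ', Real.exp (-t * u) * |F u - c * u|)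
      ≤ ε/4 * (1 / t ^ 2) := by
    have hb1 : (∫ u in Ioc (0:ℝ) δ', Real.exp (-t * u) * |F u - c * u|)
        ≤ ∫ u in Ioc (0:ℝ) δ', ε/4 * (u * Real.exp (-t * u)) := by
      refine setIntegral_mono_on (Iabs.mono_set Ioc_subset_Ioi_self)
        (((abelian_lemB_int ht1).mono_set Ioc_subset_Ioi_self).const_mul (ε/4))
        measurableSet_Ioc ?_
      intro u hu
      calc Real.exp (-t * u) * |F u - c * u| ≤ Real.exp (-t * u) * (ε/4 * u) :=
            mul_le_mul_of_nonneg_left (hsmall u hu) (Real.exp_pos _).le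
        _ = ε/4 * (u * Real.exp (-t * u)) := by ring
    have hb2 : (∫ u in Ioc (0:ℝ) δ', ε/4 * (u * Real.exp (-t * u)))
        = ε/4 * ∫ u in Ioc (0:ℝ) δ', u * Real.exp (-t * u) := integral_const_mul _ _
    have hb3 : (∫ u in Ioc (0:ℝ) δ', u * Real.exp (-t * u))
        ≤ ∫ u in Ioi (0:ℝ), u * Real.exp (-t * u) := by
      refine setIntegral_mono_set (abelian_lemB_int ht1) ?_
        (HasSubset.Subset.eventuallyLE Ioc_subset_Ioi_self)
      filter_upwards [ae_restrict_mem measurableSet_Ioi] with u hu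
      have : (0:ℝ) < u := hu
      positivity
    calc (∫ u in Ioc (0:ℝ) δ', Real.exp (-t * u) * |F u - c * u|) ≤ _ := hb1
      _ = _ := hb2
      _ ≤ ε/4 * ∫ u in Ioi (0:ℝ), u * Real.exp (-t * u) :=
          mul_le_mul_of_nonneg_left hb3 (by linarith)
      _ = ε/4 * (1 / t ^ 2) := by rw [abelian_lemB ht1]
  -- second piece
  have hpiece2 : (∫ u in Ioi δ', Real.exp (-t * u) * |F u - c * u|)
      ≤ K * (Real.exp (-(t-1) * δ') / (t-1)) := by
    have hb1 : (∫ u in Ioi δ', Real.exp (-t * u) * |F u - c * u|)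
        ≤ ∫ u in Ioi δ', K * Real.exp (-(t-1) * u) := by
      refine setIntegral_mono_on (Iabs.mono_set (Ioi_subset_Ioi hδ'pos.le))
        ((exp_neg_integrableOn_Ioi δ' htm1).const_mul K) measurableSet_Ioi ?_
      intro u hu
      have hu0 : 0 < u := lt_trans hδ'pos hu
      have hue : u ≤ Real.exp u := (Real.add_one_le_exp u).trans' (by linarith)
      have habs : |F u - c * u| ≤ K * Real.exp u := by
        calc |F u - c * u| ≤ |F u| + |c * u| := abs_sub _ _
          _ ≤ Real.exp u * C + |c| * u := by
              have := hFb u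
              rw [abs_mul, abs_of_pos hu0]
              linarith
          _ ≤ Real.exp u * C + |c| * Real.exp u :=
              add_le_add_right (mul_le_mul_of_nonneg_left hue (abs_nonneg c)) _
          _ = K * Real.exp u := by rw [hK]; ring
      calc Real.exp (-t * u) * |F u - c * u| ≤ Real.exp (-t * u) * (K * Real.exp u) :=
            mul_le_mul_of_nonneg_left habs (Real.exp_pos _).le
        _ = K * Real.exp (-(t-1) * u) := by
            rw [mul_comm K (Real.exp u), ← mul_assoc, ← Real.exp_add,
              (by ring : -t * u + u = -(t-1) * u)]
            ring
    rw [integral_const_mul, abelian_lemA htm1 δ'] at hb1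
    exact hb1
  -- put it together
  rw [Real.dist_eq, hdiff]
  have habs2 : |t ^ 2 * ∫ u in Ioi (0:ℝ), Real.exp (-t * u) * (F u - c * u)|
      ≤ t ^ 2 * ∫ u in Ioi (0:ℝ), Real.exp (-t * u) * |F u - c * u| := by
    rw [abs_mul, abs_of_pos (by positivity : (0:ℝ) < t ^ 2)]
    refine mul_le_mul_of_nonneg_left ?_ (by positivity)
    calc |∫ u in Ioi (0:ℝ), Real.exp (-t * u) * (F u - c * u)|
        = ‖∫ u in Ioi (0:ℝ), Real.exp (-t * u) * (F u - c * u)‖ := (Real.norm_eq_abs _).symm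
      _ ≤ ∫ u in Ioi (0:ℝ), ‖Real.exp (-t * u) * (F u - c * u)‖ :=
          MeasureTheory.norm_integral_le_integral_norm _
      _ = ∫ u in Ioi (0:ℝ), Real.exp (-t * u) * |F u - c * u| := by
          congr 1; funext u
          rw [Real.norm_eq_abs, abs_mul, abs_of_pos (Real.exp_pos _)]
  have hT2 := hT t hTt
  rw [Real.dist_eq, sub_zero] at hT2
  have htailb : t ^ 2 * (K * (Real.exp (-(t-1) * δ') / (t-1)))
      ≤ K * Real.exp δ' * 2 * (t * Real.exp (-δ' * t)) := abelian_tailb hK0 ht2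
  have hfinal : |t ^ 2 * ∫ u in Ioi (0:ℝ), Real.exp (-t * u) * (F u - c * u)|
      ≤ ε/4 + t ^ 2 * (K * (Real.exp (-(t-1) * δ') / (t-1))) := by
    calc |t ^ 2 * ∫ u in Ioi (0:ℝ), Real.exp (-t * u) * (F u - c * u)|
        ≤ t ^ 2 * ∫ u in Ioi (0:ℝ), Real.exp (-t * u) * |F u - c * u| := habs2
      _ = t ^ 2 * ((∫ u in Ioc (0:ℝ) δ', Real.exp (-t * u) * |F u - c * u|)
            + ∫ u in Ioi δ', Real.exp (-t * u) * |F u - c * u|) := by rw [hsplit]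
      _ ≤ t ^ 2 * (ε/4 * (1 / t ^ 2) + K * (Real.exp (-(t-1) * δ') / (t-1))) := by
          refine mul_le_mul_of_nonneg_left (add_le_add hpiece1 hpiece2) (by positivity)
      _ = ε/4 + t ^ 2 * (K * (Real.exp (-(t-1) * δ') / (t-1))) := by
          field_simp
  have h3 : t ^ 2 * (K * (Real.exp (-(t-1) * δ') / (t-1))) < ε/2 :=
    htailb.trans_lt ((le_abs_self _).trans_lt hT2)
  calc |t ^ 2 * ∫ u in Ioi (0:ℝ), Real.exp (-t * u) * (F u - c * u)|
      ≤ ε/4 + t ^ 2 * (K * (Real.exp (-(t-1) * δ') / (t-1))) := hfinal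
    _ < ε/4 + ε/2 := add_lt_add_right h3 _
    _ < ε := by linarith
end
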